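/- Fix a partition 0 = t_0 < t_1 < ⋯ < t_N = 1 of [0,1]; for an integrable function g on (0,1) let m_j(g) = (t_j − t_{j−1})^{−1} ∫_{t_{j−1}}^{t_j} g denote its mean over the j-th subinterval. Let f : [0,1] → ℝ be continuous, let w_ℓ ≤ w_u be constants with M := max(|w_ℓ|, |w_u|) < π², set c₂ = 1 − M/π² and κ = ‖f‖_{L²(0,1)}/(2π c₂³). Let w, φ, ψ : (0,1) → ℝ be measurable with w_ℓ ≤ w(x) ≤ w_u, |φ(x)| ≤ w_u − w_ℓ, and |ψ(x)| ≤ w_u − w_ℓ for almost every x. Let u be continuously differentiable on [0,1], vanishing at 0 and 1, twice differentiable on each open subinterval with −u″(x) + m_j(w) m_j(u) = f(x) there; let q_φ and q_ψ be continuously differentiable on [0,1], vanishing at 0 and 1, twice differentiable on each open subinterval with −q_φ″(x) + m_j(w) m_j(q_φ) = −m_j(u) m_j(φ) and −q_ψ″(x) + m_j(w) m_j(q_ψ) = −m_j(u) m_j(ψ) there; and let ξ be continuously differentiable on [0,1], vanishing at 0 and 1, twice differentiable on each open subinterval with −ξ″(x) + m_j(w) m_j(ξ) = −m_j(q_φ)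 m_j(ψ) − m_j(q_ψ) m_j(φ) there. Then (∫_0^1 ξ(x)² dx)^{1/2} ≤ κ · (∫_0^1 |ψ(x)| dx) · (∫_0^1 |φ(x)| dx). -/

import Mathlib

/-!
Testing the equation of a cell with the solution `v` and summing over the cells (the boundary
terms telescope to `v'(1) v(1) - v'(0) v(0) = 0`) gives
`‖v'‖² = ∑ⱼ ∫ ρⱼ v - ∑ⱼ mⱼ(w) mⱼ(v) ∫ v`. Since `mⱼ(w) ≥ -M`, `mⱼ(v) ∫ v ≤ ∫ v²` on each cell
(Jensen) and `π² ‖v‖² ≤ ‖v'‖²` (Wirtinger), the zeroth-order term costs at most `M/π² ‖v'‖²`,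
so `c₂ ‖v'‖² ≤ ∑ⱼ ∫ ρⱼ v`. For `u` Cauchy–Schwarz and Wirtinger turn this into
`π c₂ ‖u'‖ ≤ ‖f‖`; for the cellwise constant sources of `q_φ`, `q_ψ`, `ξ` the bound
`‖v‖_∞ ≤ ‖v'‖/2` gives `4 c₂ ‖q_φ'‖ ≤ ‖u'‖ ‖φ‖₁`, `4 c₂ ‖q_ψ'‖ ≤ ‖u'‖ ‖ψ‖₁` and
`4 c₂ ‖ξ'‖ ≤ ‖q_φ'‖ ‖ψ‖₁ + ‖q_ψ'‖ ‖φ‖₁`. Chaining these with Wirtinger once more for `ξ` gives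
`‖ξ‖ ≤ ‖f‖ ‖ψ‖₁ ‖φ‖₁ / (8 π² c₂³)`, which is stronger than the claim.
-/

open MeasureTheory Real

/-- The mean value of `g` over the `j`-th subinterval `(t (j-1), t j)`. -/
noncomputable def cellMean (t : ℕ → ℝ) (j : ℕ) (g : ℝ → ℝ) : ℝ :=
  (t j - t (j - 1))⁻¹ * ∫ x in (t (j - 1))..(t j), g x

open Set

theorem sq_integral_mul_le_integral_sq_mul_integral_sq {α : Type*} [MeasurableSpace α]
    {μ : Measure α} {f g : α → ℝ} (hf : Integrable (fun x => f x ^ 2) μ)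
    (hg : Integrable (fun x => g x ^ 2) μ) (hfg : Integrable (fun x => f x * g x) μ) :
    (∫ x, f x * g x ∂μ) ^ 2 ≤ (∫ x, f x ^ 2 ∂μ) * ∫ x, g x ^ 2 ∂μ := by
  have hquad : ∀ s : ℝ, 0 ≤ (∫ x, f x ^ 2 ∂μ) * (s * s) + (-2 * ∫ x, f x * g x ∂μ) * s
      + ∫ x, g x ^ 2 ∂μ := fun s => by
    have hexp : (fun x => (s * f x - g x) ^ 2)
        = fun x => s ^ 2 * f x ^ 2 - 2 * s * (f x * g x) + g x ^ 2 := by ext; ring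
    have h : 0 ≤ ∫ x, (s * f x - g x) ^ 2 ∂μ := integral_nonneg fun x => sq_nonneg _
    have h1 : Integrable (fun x => s ^ 2 * f x ^ 2 - 2 * s * (f x * g x)) μ :=
      (hf.const_mul _).sub (hfg.const_mul _)
    rw [hexp, integral_add h1 hg, integral_sub (hf.const_mul _) (hfg.const_mul _),
      integral_const_mul, integral_const_mul] at h
    linarith
  have := discrim_le_zero hquad
  rw [discrim] at this
  linarith

theorem sq_intervalIntegral_mul_le {a b : ℝ} (hab : a ≤ b) {f g : ℝ → ℝ}
    (hf : IntervalIntegrable (fun x => f x ^ 2) volume a b)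
    (hg : IntervalIntegrable (fun x => g x ^ 2) volume a b)
    (hfg : IntervalIntegrable (fun x => f x * g x) volume a b) :
    (∫ x in a..b, f x * g x) ^ 2 ≤ (∫ x in a..b, f x ^ 2) * ∫ x in a..b, g x ^ 2 := by
  simp only [intervalIntegral.integral_of_le hab]
  exact sq_integral_mul_le_integral_sq_mul_integral_sq hf.1 hg.1 hfg.1

theorem inv_mul_sq_integral_le_integral_sq {p q : ℝ} (hpq : p < q) {v : ℝ → ℝ}
    (hv : ContinuousOn v (Icc p q)) :
    (q - p)⁻¹ * (∫ x in p..q, v x) ^ 2 ≤ ∫ x in p..q, v x ^ 2 := by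
  have h := sq_intervalIntegral_mul_le hpq.le ((hv.pow 2).intervalIntegrable_of_Icc hpq.le)
    (g := fun _ => 1) (by simp) (by simpa using hv.intervalIntegrable_of_Icc hpq.le)
  simp only [mul_one, one_pow, intervalIntegral.integral_const, smul_eq_mul] at h
  rwa [inv_mul_le_iff₀ (sub_pos.2 hpq), mul_comm]

theorem two_mul_min_le_sin_pi_mul {y : ℝ} (hy : y ∈ Icc (0:ℝ) 1) :
    2 * min y (1 - y) ≤ sin (π * y) := by
  have jordan : ∀ z ∈ Icc (0:ℝ) (1 / 2), 2 * z ≤ sin (π * z) := fun z hz => by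
    have h := mul_le_sin (x := π * z) (by nlinarith [pi_pos, hz.1]) (by nlinarith [pi_pos, hz.2])
    rwa [← mul_assoc, div_mul_cancel₀ _ pi_ne_zero] at h
  rcases le_total y (1 / 2) with h | h
  · exact (mul_le_mul_of_nonneg_left (min_le_left _ _) zero_le_two).trans (jordan y ⟨hy.1, h⟩)
  · have h' := jordan (1 - y) ⟨by linarith [hy.2], by linarith⟩
    rw [show π * (1 - y) = π - π * y by ring, sin_pi_sub] at h'
    exact (mul_le_mul_of_nonneg_left (min_le_right _ _) zero_le_two).trans h'

theorem abs_pi_mul_cot_mul_sq_le {a K y : ℝ} (hy : y ∈ Icc (0:ℝ) 1)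
    (ha : |a| ≤ K * min y (1 - y)) :
    |π * cot (π * y) * a ^ 2| ≤ π * K ^ 2 / 2 * min y (1 - y) := by
  have hs := two_mul_min_le_sin_pi_mul hy
  rcases (le_min hy.1 (sub_nonneg.2 hy.2)).eq_or_lt with hm | hm
  · rw [← hm, mul_zero, abs_nonpos_iff] at ha
    simp [ha, ← hm]
  have hs0 : 0 < sin (π * y) := by linarith
  calc |π * cot (π * y) * a ^ 2| = π * |cos (π * y)| * a ^ 2 / sin (π * y) := by
        rw [cot_eq_cos_div_sin, abs_mul, abs_mul, abs_div, abs_of_pos hs0, abs_of_pos pi_pos,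
          abs_of_nonneg (sq_nonneg a)]
        ring
    _ ≤ π * 1 * (K * min y (1 - y)) ^ 2 / (2 * min y (1 - y)) := by
        gcongr π * ?_ * ?_ / ?_
        · exact abs_cos_le_one _
        · exact (sq_abs a).symm.le.trans (pow_le_pow_left₀ (abs_nonneg _) ha 2)
    _ = π * K ^ 2 / 2 * min y (1 - y) := by field_simp

theorem hasDerivAt_pi_mul_cot_mul_sq {v : ℝ → ℝ} {d y : ℝ} (hy : sin (π * y) ≠ 0)
    (hv : HasDerivAt v d y) :
    HasDerivAt (fun z => π * cot (π * z) * v z ^ 2)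
      (d ^ 2 - π ^ 2 * v y ^ 2 - (d - π * cot (π * y) * v y) ^ 2) y := by
  have hπy : HasDerivAt (fun z => π * z) π y := by
    simpa using (hasDerivAt_id y).const_mul π
  have hcos : HasDerivAt (fun z => cos (π * z)) (-sin (π * y) * π) y :=
    (hasDerivAt_cos _).comp y hπy
  have hsin : HasDerivAt (fun z => sin (π * z)) (cos (π * y) * π) y :=
    (hasDerivAt_sin _).comp y hπy
  simp only [cot_eq_cos_div_sin]
  refine (((hcos.div hsin hy).const_mul π).mul (hv.pow 2)).congr_deriv ?_
  simp only [Pi.div_apply, Pi.pow_apply]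
  field_simp
  ring

theorem mul_le_of_mul_sq_le_mul {a b c : ℝ} (ha : 0 ≤ a) (hb : 0 ≤ b) (h : c * a ^ 2 ≤ b * a) :
    c * a ≤ b := by
  rcases ha.eq_or_lt with rfl | ha
  · simpa using hb
  · exact le_of_mul_le_mul_right (by linarith) ha

noncomputable def l2Norm (g : ℝ → ℝ) : ℝ := √(∫ x in (0:ℝ)..1, g x ^ 2)

theorem l2Norm_nonneg (g : ℝ → ℝ) : 0 ≤ l2Norm g := Real.sqrt_nonneg _

theorem sq_l2Norm (g : ℝ → ℝ) : l2Norm g ^ 2 = ∫ x in (0:ℝ)..1, g x ^ 2 :=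
  Real.sq_sqrt (intervalIntegral.integral_nonneg zero_le_one fun _ _ => sq_nonneg _)

theorem integral_mul_le_l2Norm_mul_l2Norm {f g : ℝ → ℝ} (hf : ContinuousOn f (Icc 0 1))
    (hg : ContinuousOn g (Icc 0 1)) : ∫ x in (0:ℝ)..1, f x * g x ≤ l2Norm f * l2Norm g := by
  have h := sq_intervalIntegral_mul_le zero_le_one
    ((hf.pow 2).intervalIntegrable_of_Icc zero_le_one)
    ((hg.pow 2).intervalIntegrable_of_Icc zero_le_one)
    ((hf.mul hg).intervalIntegrable_of_Icc zero_le_one)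
  rw [l2Norm, l2Norm,
    ← Real.sqrt_mul (intervalIntegral.integral_nonneg zero_le_one fun _ _ => sq_nonneg _)]
  exact (le_abs_self _).trans (Real.abs_le_sqrt h)

structure IsDirichletC1 (v v' : ℝ → ℝ) : Prop where
  hasDerivAt : ∀ x ∈ Icc (0:ℝ) 1, HasDerivAt v (v' x) x
  continuousOn_deriv : ContinuousOn v' (Icc 0 1)
  apply_zero : v 0 = 0
  apply_one : v 1 = 0

namespace IsDirichletC1

variable {v v' : ℝ → ℝ}

theorem continuousOn (hv : IsDirichletC1 v v') : ContinuousOn v (Icc 0 1) :=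
  fun x hx => (hv.hasDerivAt x hx).continuousAt.continuousWithinAt

theorem intervalIntegrable_sq (hv : IsDirichletC1 v v') :
    IntervalIntegrable (fun x => v x ^ 2) volume 0 1 :=
  (hv.continuousOn.pow 2).intervalIntegrable_of_Icc zero_le_one

theorem intervalIntegrable_deriv_sq (hv : IsDirichletC1 v v') :
    IntervalIntegrable (fun x => v' x ^ 2) volume 0 1 :=
  (hv.continuousOn_deriv.pow 2).intervalIntegrable_of_Icc zero_le_one

theorem abs_le_mul_min (hv : IsDirichletC1 v v') {K : ℝ} (hK : ∀ x ∈ Icc (0:ℝ) 1, ‖v' x‖ ≤ K)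
    {y : ℝ} (hy : y ∈ Icc (0:ℝ) 1) : |v y| ≤ K * min y (1 - y) := by
  have hK0 : 0 ≤ K := (norm_nonneg _).trans (hK 0 (left_mem_Icc.2 zero_le_one))
  have mvt := fun x (hx : x ∈ Icc (0:ℝ) 1) =>
    (convex_Icc (0:ℝ) 1).norm_image_sub_le_of_norm_hasDerivWithin_le
      (fun z hz => (hv.hasDerivAt z hz).hasDerivWithinAt) hK hx hy
  have h0 := mvt 0 (left_mem_Icc.2 zero_le_one)
  have h1 := mvt 1 (right_mem_Icc.2 zero_le_one)
  rw [hv.apply_zero, sub_zero, sub_zero, Real.norm_eq_abs, Real.norm_eq_abs,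
    abs_of_nonneg hy.1] at h0
  rw [hv.apply_one, sub_zero, Real.norm_eq_abs, Real.norm_eq_abs, abs_sub_comm,
    abs_of_nonneg (sub_nonneg.2 hy.2)] at h1
  rw [mul_min_of_nonneg _ _ hK0]
  exact le_min h0 h1

theorem pi_sq_mul_integral_sq_le (hv : IsDirichletC1 v v') :
    π ^ 2 * ∫ x in (0:ℝ)..1, v x ^ 2 ≤ ∫ x in (0:ℝ)..1, v' x ^ 2 := by
  obtain ⟨K, hK⟩ := isCompact_Icc.exists_bound_of_continuousOn hv.continuousOn_deriv
  /- `F' = v'² - π² v² - (v' - π cot(πy) v)² ≤ v'² - π² v²` on `(0, 1)`, and `F` is continuous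
  on `[0, 1]` with `F 0 = F 1 = 0`: the zero of `v` at each endpoint beats the pole of `cot`, and
  at the endpoints themselves `cot 0 = cot π = 0` because `x / 0 = 0`. -/
  set F : ℝ → ℝ := fun y => π * cot (π * y) * v y ^ 2
  have hF_le : ∀ y ∈ Icc (0:ℝ) 1, |F y| ≤ π * K ^ 2 / 2 * min y (1 - y) := fun y hy =>
    abs_pi_mul_cot_mul_sq_le hy (hv.abs_le_mul_min hK hy)
  have hFderiv : ∀ y ∈ Ioo (0:ℝ) 1,
      HasDerivAt F (v' y ^ 2 - π ^ 2 * v y ^ 2 - (v' y - π * cot (π * y) * v y) ^ 2) y :=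
    fun y hy => hasDerivAt_pi_mul_cot_mul_sq
      (sin_pos_of_pos_of_lt_pi (by nlinarith [pi_pos, hy.1]) (by nlinarith [pi_pos, hy.2])).ne'
      (hv.hasDerivAt y (Ioo_subset_Icc_self hy))
  have hFcont : ContinuousOn F (Icc 0 1) := by
    intro y hy
    by_cases hy' : y ∈ Ioo (0:ℝ) 1
    · exact (hFderiv y hy').continuousAt.continuousWithinAt
    have hm : min y (1 - y) = 0 := by
      rcases eq_endpoints_or_mem_Ioo_of_mem_Icc hy with rfl | rfl | h
      · simp
      · simp
      · exact absurd h hy'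
    have hFy : F y = 0 := abs_nonpos_iff.1 (by simpa [hm] using hF_le y hy)
    have hcont : Continuous fun z : ℝ => π * K ^ 2 / 2 * min z (1 - z) := by fun_prop
    have hlim := hcont.continuousWithinAt (s := Icc 0 1) (x := y)
    rw [ContinuousWithinAt, hm, mul_zero] at hlim
    rw [ContinuousWithinAt, hFy]
    exact squeeze_zero_norm' (eventually_nhdsWithin_of_forall hF_le) hlim
  have hint : IntegrableOn (fun y => v' y ^ 2 - π ^ 2 * v y ^ 2) (Icc 0 1) :=
    ((hv.continuousOn_deriv.pow 2).sub
      (continuousOn_const.mul (hv.continuousOn.pow 2))).integrableOn_Icc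
  have key := intervalIntegral.sub_le_integral_of_hasDeriv_right_of_le zero_le_one hFcont
    (fun y hy => (hFderiv y hy).hasDerivWithinAt) hint (fun y _ => sub_le_self _ (sq_nonneg _))
  have hF0 : F 0 = 0 := by simp [F, cot_eq_cos_div_sin]
  have hF1 : F 1 = 0 := by simp [F, cot_eq_cos_div_sin]
  rw [hF0, hF1, intervalIntegral.integral_sub hv.intervalIntegrable_deriv_sq
    (hv.intervalIntegrable_sq.const_mul _),
    intervalIntegral.integral_const_mul] at key
  linarith

theorem pi_mul_l2Norm_le (hv : IsDirichletC1 v v') : π * l2Norm v ≤ l2Norm v' := by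
  have h := Real.sqrt_le_sqrt hv.pi_sq_mul_integral_sq_le
  rwa [Real.sqrt_mul (sq_nonneg π), Real.sqrt_sq pi_pos.le] at h

theorem abs_sub_le_integral_abs_deriv (hv : IsDirichletC1 v v') {a b : ℝ} (ha : 0 ≤ a)
    (hab : a ≤ b) (hb : b ≤ 1) : |v b - v a| ≤ ∫ y in a..b, |v' y| := by
  have hsub : uIcc a b ⊆ Icc 0 1 := by rw [uIcc_of_le hab]; exact Icc_subset_Icc ha hb
  rw [← intervalIntegral.integral_eq_sub_of_hasDerivAt (fun y hy => hv.hasDerivAt y (hsub hy))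
    ((hv.continuousOn_deriv.mono hsub).intervalIntegrable)]
  exact intervalIntegral.abs_integral_le_integral_abs hab

theorem abs_le_half_l2Norm_deriv (hv : IsDirichletC1 v v') {x : ℝ} (hx : x ∈ Icc (0:ℝ) 1) :
    |v x| ≤ l2Norm v' / 2 := by
  have hint : IntervalIntegrable (fun y => |v' y|) volume 0 1 :=
    hv.continuousOn_deriv.abs.intervalIntegrable_of_Icc zero_le_one
  have hleft := hv.abs_sub_le_integral_abs_deriv le_rfl hx.1 hx.2
  have hright := hv.abs_sub_le_integral_abs_deriv hx.1 hx.2 le_rfl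
  rw [hv.apply_zero, sub_zero] at hleft
  rw [hv.apply_one, zero_sub, abs_neg] at hright
  have hsplit := intervalIntegral.integral_add_adjacent_intervals
    (hint.mono_set (uIcc_subset_uIcc_left (mem_uIcc_of_le hx.1 hx.2)))
    (hint.mono_set (uIcc_subset_uIcc_right (mem_uIcc_of_le hx.1 hx.2)))
  have hcs : (∫ y in (0:ℝ)..1, |v' y| * 1) ^ 2 ≤
      (∫ y in (0:ℝ)..1, |v' y| ^ 2) * ∫ y in (0:ℝ)..1, 1 ^ 2 :=
    sq_intervalIntegral_mul_le zero_le_one (by simpa using hv.intervalIntegrable_deriv_sq)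
      (by simp) (by simpa using hint)
  simp only [mul_one, one_pow, sq_abs, intervalIntegral.integral_const, sub_zero,
    smul_eq_mul] at hcs
  have hL1 := (le_abs_self _).trans (Real.abs_le_sqrt hcs)
  unfold l2Norm
  linarith

end IsDirichletC1

theorem integral_deriv_sq_eq_of_ode {p q c : ℝ} (hpq : p ≤ q) {v v' v'' ρ : ℝ → ℝ}
    (hv : ∀ x ∈ Icc p q, HasDerivAt v (v' x) x) (hv' : ContinuousOn v' (Icc p q))
    (hρ : ContinuousOn ρ (Icc p q))
    (hode : ∀ x ∈ Ioo p q, HasDerivAt v' (v'' x) x ∧ -v'' x + c = ρ x) :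
    ∫ x in p..q, v' x ^ 2 =
      v' q * v q - v' p * v p + (∫ x in p..q, ρ x * v x) - c * ∫ x in p..q, v x := by
  have hvc : ContinuousOn v (Icc p q) := fun x hx => (hv x hx).continuousAt.continuousWithinAt
  have hderiv : ∀ x ∈ Ioo p q,
      HasDerivAt (fun y => v' y * v y) (c * v x - ρ x * v x + v' x ^ 2) x := by
    intro x hx
    obtain ⟨hv'', heq⟩ := hode x hx
    refine (hv''.mul (hv x (Ioo_subset_Icc_self hx))).congr_deriv ?_
    linear_combination (-v x) * heq
  have hcv : IntervalIntegrable (fun x => c * v x) volume p q :=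
    (hvc.intervalIntegrable_of_Icc hpq).const_mul c
  have hρv : IntervalIntegrable (fun x => ρ x * v x) volume p q :=
    (hρ.mul hvc).intervalIntegrable_of_Icc hpq
  have hsq : IntervalIntegrable (fun x => v' x ^ 2) volume p q :=
    (hv'.pow 2).intervalIntegrable_of_Icc hpq
  have hftc := intervalIntegral.integral_eq_sub_of_hasDeriv_right_of_le hpq (hv'.mul hvc)
    (fun x hx => (hderiv x hx).hasDerivWithinAt) ((hcv.sub hρv).add hsq)
  rw [intervalIntegral.integral_add (hcv.sub hρv) hsq, intervalIntegral.integral_sub hcv hρv,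
    intervalIntegral.integral_const_mul, Pi.mul_apply, Pi.mul_apply] at hftc
  linarith

theorem intervalIntegrable_of_ae_abs_le {a b B : ℝ} (hab : a ≤ b) {g : ℝ → ℝ} (hg : Measurable g)
    (h : ∀ᵐ x ∂volume.restrict (Ioo a b), |g x| ≤ B) : IntervalIntegrable g volume a b := by
  rw [intervalIntegrable_iff', uIcc_of_le hab, integrableOn_Icc_iff_integrableOn_Ioo]
  exact Measure.integrableOn_of_bounded measure_Ioo_lt_top.ne hg.aestronglyMeasurable h

theorem cellMean_succ (t : ℕ → ℝ) (k : ℕ) (g : ℝ → ℝ) :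
    cellMean t (k + 1) g = (t (k + 1) - t k)⁻¹ * ∫ x in t k..t (k + 1), g x :=
  rfl

theorem abs_cellMean_le {t : ℕ → ℝ} {k : ℕ} (hk : t k < t (k + 1)) {g : ℝ → ℝ} {B : ℝ}
    (hg : ∀ x ∈ Icc (t k) (t (k + 1)), |g x| ≤ B) : |cellMean t (k + 1) g| ≤ B := by
  have hlen : 0 < t (k + 1) - t k := sub_pos.2 hk
  have h := intervalIntegral.norm_integral_le_of_norm_le_const (f := g) (a := t k) (b := t (k + 1))
    fun x hx => hg x (Ioc_subset_Icc_self (by rwa [uIoc_of_le hk.le] at hx))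
  rw [Real.norm_eq_abs, abs_of_pos hlen] at h
  rw [cellMean_succ, abs_mul, abs_inv, abs_of_pos hlen, inv_mul_le_iff₀ hlen, mul_comm]
  exact h

theorem neg_mul_integral_sq_le_mul_cellMean_mul_integral {t : ℕ → ℝ} {k : ℕ}
    (hk : t k < t (k + 1)) {v : ℝ → ℝ} (hv : ContinuousOn v (Icc (t k) (t (k + 1))))
    {M a : ℝ} (hM : 0 ≤ M) (ha : -M ≤ a) :
    -M * ∫ x in t k..t (k + 1), v x ^ 2 ≤
      a * cellMean t (k + 1) v * ∫ x in t k..t (k + 1), v x := by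
  have hX : cellMean t (k + 1) v * ∫ x in t k..t (k + 1), v x =
      (t (k + 1) - t k)⁻¹ * (∫ x in t k..t (k + 1), v x) ^ 2 := by
    rw [cellMean_succ]; ring
  have hX0 : 0 ≤ (t (k + 1) - t k)⁻¹ * (∫ x in t k..t (k + 1), v x) ^ 2 :=
    mul_nonneg (inv_nonneg.2 (sub_pos.2 hk).le) (sq_nonneg _)
  rw [mul_assoc, hX]
  calc -M * ∫ x in t k..t (k + 1), v x ^ 2
      ≤ -M * ((t (k + 1) - t k)⁻¹ * (∫ x in t k..t (k + 1), v x) ^ 2) :=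
        mul_le_mul_of_nonpos_left (inv_mul_sq_integral_le_integral_sq hk hv) (neg_nonpos.2 hM)
    _ ≤ a * ((t (k + 1) - t k)⁻¹ * (∫ x in t k..t (k + 1), v x) ^ 2) :=
        mul_le_mul_of_nonneg_right ha hX0

structure IsUnitIntervalPartition (N : ℕ) (t : ℕ → ℝ) : Prop where
  apply_zero : t 0 = 0
  apply_last : t N = 1
  lt_succ : ∀ i < N, t i < t (i + 1)

namespace IsUnitIntervalPartition

variable {N : ℕ} {t : ℕ → ℝ}

theorem Icc_subset (hP : IsUnitIntervalPartition N t) {k : ℕ} (hk : k < N) :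
    Icc (t k) (t (k + 1)) ⊆ Icc 0 1 := by
  have hmono : MonotoneOn t (Iic N) :=
    (strictMonoOn_Iic_of_lt_succ (by simpa using hP.lt_succ)).monotoneOn
  apply Icc_subset_Icc
  · rw [← hP.apply_zero]
    exact hmono (mem_Iic.2 (Nat.zero_le N)) (mem_Iic.2 hk.le) (Nat.zero_le k)
  · rw [← hP.apply_last]
    exact hmono (mem_Iic.2 hk) (mem_Iic.2 le_rfl) hk

theorem sum_integral (hP : IsUnitIntervalPartition N t) {f : ℝ → ℝ}
    (hf : IntervalIntegrable f volume 0 1) :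
    ∑ k ∈ Finset.range N, ∫ x in t k..t (k + 1), f x = ∫ x in (0:ℝ)..1, f x := by
  rw [intervalIntegral.sum_integral_adjacent_intervals fun k hk => hf.mono_set ?_,
    hP.apply_zero, hP.apply_last]
  rw [uIcc_of_le (hP.lt_succ k hk).le, uIcc_of_le zero_le_one]
  exact hP.Icc_subset hk

theorem le_cellMean_of_ae_le (hP : IsUnitIntervalPartition N t) {k : ℕ} (hk : k < N)
    {w : ℝ → ℝ} (hw : IntervalIntegrable w volume 0 1) {c : ℝ}
    (h : ∀ᵐ x ∂volume.restrict (Ioo (0:ℝ) 1), c ≤ w x) : c ≤ cellMean t (k + 1) w := by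
  have hlt := hP.lt_succ k hk
  have hsub := hP.Icc_subset hk
  rw [Measure.restrict_congr_set Ioo_ae_eq_Icc] at h
  have hint := intervalIntegral.integral_mono_ae_restrict hlt.le intervalIntegrable_const
    (hw.mono_set (by rwa [uIcc_of_le hlt.le, uIcc_of_le zero_le_one]))
    (ae_restrict_of_ae_restrict_of_subset hsub h)
  rw [intervalIntegral.integral_const, smul_eq_mul] at hint
  rw [cellMean_succ, le_inv_mul_iff₀ (sub_pos.2 hlt)]
  linarith

theorem neg_max_abs_le_cellMean (hP : IsUnitIntervalPartition N t) {w : ℝ → ℝ}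
    (hwm : Measurable w) {wl wu : ℝ}
    (hwb : ∀ᵐ x ∂volume.restrict (Ioo (0:ℝ) 1), wl ≤ w x ∧ w x ≤ wu) :
    ∀ k < N, -max |wl| |wu| ≤ cellMean t (k + 1) w := fun _ hk =>
  hP.le_cellMean_of_ae_le hk (intervalIntegrable_of_ae_abs_le zero_le_one hwm
    (hwb.mono fun _ hx => abs_le_max_abs_abs hx.1 hx.2))
    (hwb.mono fun _ hx => ((neg_le_neg (le_max_left _ _)).trans (neg_abs_le wl)).trans hx.1)

theorem sum_mul_abs_cellMean_mul_cellMean_le (hP : IsUnitIntervalPartition N t)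
    {g χ : ℝ → ℝ} {B : ℝ} (hg : ∀ x ∈ Icc (0:ℝ) 1, |g x| ≤ B)
    (hχ : IntervalIntegrable χ volume 0 1) :
    ∑ k ∈ Finset.range N, (t (k + 1) - t k) * |cellMean t (k + 1) g * cellMean t (k + 1) χ| ≤
      B * ∫ x in (0:ℝ)..1, |χ x| := by
  have hB : 0 ≤ B := (abs_nonneg _).trans (hg 0 (left_mem_Icc.2 zero_le_one))
  rw [← hP.sum_integral hχ.abs, Finset.mul_sum]
  refine Finset.sum_le_sum fun k hk => ?_
  have hk := Finset.mem_range.1 hk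
  have hlen : 0 < t (k + 1) - t k := sub_pos.2 (hP.lt_succ k hk)
  calc (t (k + 1) - t k) * |cellMean t (k + 1) g * cellMean t (k + 1) χ|
      = |cellMean t (k + 1) g| * |∫ x in t k..t (k + 1), χ x| := by
        rw [cellMean_succ t k χ, abs_mul, abs_mul, abs_inv, abs_of_pos hlen]
        field_simp
    _ ≤ B * ∫ x in t k..t (k + 1), |χ x| :=
        mul_le_mul (abs_cellMean_le (hP.lt_succ k hk) fun x hx => hg x (hP.Icc_subset hk hx))
          (intervalIntegral.abs_integral_le_integral_abs (hP.lt_succ k hk).le) (abs_nonneg _) hB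

end IsUnitIntervalPartition

structure IsCellSolution (N : ℕ) (t : ℕ → ℝ) (w : ℝ → ℝ) (ρ : ℕ → ℝ → ℝ) (v v' v'' : ℝ → ℝ) : Prop
    extends IsDirichletC1 v v' where
  ode : ∀ j ∈ Finset.Icc 1 N, ∀ x ∈ Ioo (t (j - 1)) (t j),
    HasDerivAt v' (v'' x) x ∧ -v'' x + cellMean t j w * cellMean t j v = ρ j x

namespace IsCellSolution

variable {N : ℕ} {t : ℕ → ℝ} {w : ℝ → ℝ} {v v' v'' : ℝ → ℝ} {M : ℝ}

theorem integral_deriv_sq_eq {ρ : ℕ → ℝ → ℝ} (hv : IsCellSolution N t w ρ v v' v'')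
    (hP : IsUnitIntervalPartition N t)
    (hρ : ∀ k < N, ContinuousOn (ρ (k + 1)) (Icc (t k) (t (k + 1)))) :
    ∫ x in (0:ℝ)..1, v' x ^ 2 =
      (∑ k ∈ Finset.range N, ∫ x in t k..t (k + 1), ρ (k + 1) x * v x) -
        ∑ k ∈ Finset.range N,
          cellMean t (k + 1) w * cellMean t (k + 1) v * ∫ x in t k..t (k + 1), v x := by
  have hcell : ∀ k ∈ Finset.range N, ∫ x in t k..t (k + 1), v' x ^ 2 =
      v' (t (k + 1)) * v (t (k + 1)) - v' (t k) * v (t k) +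
        (∫ x in t k..t (k + 1), ρ (k + 1) x * v x) -
        cellMean t (k + 1) w * cellMean t (k + 1) v * ∫ x in t k..t (k + 1), v x := by
    intro k hk
    have hk := Finset.mem_range.1 hk
    have hsub := hP.Icc_subset hk
    exact integral_deriv_sq_eq_of_ode (hP.lt_succ k hk).le
      (fun x hx => hv.hasDerivAt x (hsub hx)) (hv.continuousOn_deriv.mono hsub) (hρ k hk)
      (hv.ode (k + 1) (Finset.mem_Icc.2 ⟨Nat.le_add_left 1 k, hk⟩))
  have htelescope : ∑ k ∈ Finset.range N,
      (v' (t (k + 1)) * v (t (k + 1)) - v' (t k) * v (t k)) = 0 := by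
    rw [Finset.sum_range_sub (fun k => v' (t k) * v (t k)), hP.apply_zero, hP.apply_last,
      hv.apply_zero, hv.apply_one, mul_zero, mul_zero, sub_zero]
  rw [← hP.sum_integral hv.intervalIntegrable_deriv_sq,
    Finset.sum_congr rfl hcell, Finset.sum_sub_distrib, Finset.sum_add_distrib, htelescope,
    zero_add]

theorem energy_estimate {ρ : ℕ → ℝ → ℝ} (hv : IsCellSolution N t w ρ v v' v'')
    (hP : IsUnitIntervalPartition N t) (hM : 0 ≤ M) (hw : ∀ k < N, -M ≤ cellMean t (k + 1) w)
    (hρ : ∀ k < N, ContinuousOn (ρ (k + 1)) (Icc (t k) (t (k + 1)))) :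
    (1 - M / π ^ 2) * ∫ x in (0:ℝ)..1, v' x ^ 2 ≤
      ∑ k ∈ Finset.range N, ∫ x in t k..t (k + 1), ρ (k + 1) x * v x := by
  have hcoer : -M * ∫ x in (0:ℝ)..1, v x ^ 2 ≤ ∑ k ∈ Finset.range N,
      cellMean t (k + 1) w * cellMean t (k + 1) v * ∫ x in t k..t (k + 1), v x := by
    rw [← hP.sum_integral hv.intervalIntegrable_sq, Finset.mul_sum]
    refine Finset.sum_le_sum fun k hk => ?_
    have hk := Finset.mem_range.1 hk
    exact neg_mul_integral_sq_le_mul_cellMean_mul_integral (hP.lt_succ k hk)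
      (hv.continuousOn.mono (hP.Icc_subset hk)) hM (hw k hk)
  have hpoincare := mul_le_mul_of_nonneg_left hv.pi_sq_mul_integral_sq_le
    (div_nonneg hM (sq_nonneg π))
  rw [← mul_assoc, div_mul_cancel₀ _ (pow_ne_zero 2 pi_ne_zero)] at hpoincare
  linarith [hv.integral_deriv_sq_eq hP hρ]

theorem two_mul_mul_l2Norm_deriv_le {r : ℕ → ℝ}
    (hv : IsCellSolution N t w (fun j _ => r j) v v' v'') (hP : IsUnitIntervalPartition N t)
    (hM : 0 ≤ M) (hw : ∀ k < N, -M ≤ cellMean t (k + 1) w) :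
    2 * (1 - M / π ^ 2) * l2Norm v' ≤
      ∑ k ∈ Finset.range N, (t (k + 1) - t k) * |r (k + 1)| := by
  have hE := hv.energy_estimate hP hM hw fun _ _ => continuousOn_const
  have hsource : ∑ k ∈ Finset.range N, ∫ x in t k..t (k + 1), r (k + 1) * v x ≤
      l2Norm v' / 2 * ∑ k ∈ Finset.range N, (t (k + 1) - t k) * |r (k + 1)| := by
    rw [Finset.mul_sum]
    refine Finset.sum_le_sum fun k hk => ?_
    have hk := Finset.mem_range.1 hk
    have hlen : 0 < t (k + 1) - t k := sub_pos.2 (hP.lt_succ k hk)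
    have hmean := abs_cellMean_le (g := v) (hP.lt_succ k hk) fun x hx =>
      hv.abs_le_half_l2Norm_deriv (hP.Icc_subset hk hx)
    calc ∫ x in t k..t (k + 1), r (k + 1) * v x
        = (t (k + 1) - t k) * (r (k + 1) * cellMean t (k + 1) v) := by
          rw [intervalIntegral.integral_const_mul, cellMean_succ]
          field_simp
      _ ≤ (t (k + 1) - t k) * (|r (k + 1)| * (l2Norm v' / 2)) := by
          gcongr (t (k + 1) - t k) * ?_
          calc r (k + 1) * cellMean t (k + 1) v ≤ |r (k + 1)| * |cellMean t (k + 1) v| := by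
                rw [← abs_mul]; exact le_abs_self _
            _ ≤ |r (k + 1)| * (l2Norm v' / 2) := by gcongr
      _ = l2Norm v' / 2 * ((t (k + 1) - t k) * |r (k + 1)|) := by ring
  refine mul_le_of_mul_sq_le_mul (l2Norm_nonneg _) (Finset.sum_nonneg fun k hk =>
    mul_nonneg (sub_pos.2 (hP.lt_succ k (Finset.mem_range.1 hk))).le (abs_nonneg _)) ?_
  rw [← sq_l2Norm] at hE
  linarith

theorem pi_mul_mul_l2Norm_deriv_le {f : ℝ → ℝ}
    (hv : IsCellSolution N t w (fun _ => f) v v' v'') (hP : IsUnitIntervalPartition N t)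
    (hM : 0 ≤ M) (hw : ∀ k < N, -M ≤ cellMean t (k + 1) w) (hf : ContinuousOn f (Icc 0 1)) :
    π * (1 - M / π ^ 2) * l2Norm v' ≤ l2Norm f := by
  have hE : (1 - M / π ^ 2) * ∫ x in (0:ℝ)..1, v' x ^ 2 ≤
      ∑ k ∈ Finset.range N, ∫ x in t k..t (k + 1), f x * v x :=
    hv.energy_estimate hP hM hw fun k hk => hf.mono (hP.Icc_subset hk)
  rw [hP.sum_integral (f := fun x => f x * v x) ((hf.mul hv.continuousOn).intervalIntegrable_of_Icc
    zero_le_one), ← sq_l2Norm] at hE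
  refine mul_le_of_mul_sq_le_mul (l2Norm_nonneg _) (l2Norm_nonneg _) ?_
  calc π * (1 - M / π ^ 2) * l2Norm v' ^ 2 ≤ π * (l2Norm f * l2Norm v) := by
        rw [mul_assoc]
        exact mul_le_mul_of_nonneg_left
          (hE.trans (integral_mul_le_l2Norm_mul_l2Norm hf hv.continuousOn)) pi_pos.le
    _ = l2Norm f * (π * l2Norm v) := by ring
    _ ≤ l2Norm f * l2Norm v' := mul_le_mul_of_nonneg_left hv.pi_mul_l2Norm_le (l2Norm_nonneg _)

theorem two_mul_mul_l2Norm_deriv_le_mul_integral_abs {g g' χ : ℝ → ℝ}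
    (hv : IsCellSolution N t w (fun j _ => -(cellMean t j g * cellMean t j χ)) v v' v'')
    (hP : IsUnitIntervalPartition N t) (hM : 0 ≤ M) (hw : ∀ k < N, -M ≤ cellMean t (k + 1) w)
    (hg : IsDirichletC1 g g') (hχ : IntervalIntegrable χ volume 0 1) :
    2 * (1 - M / π ^ 2) * l2Norm v' ≤ l2Norm g' / 2 * ∫ x in (0:ℝ)..1, |χ x| := by
  refine (hv.two_mul_mul_l2Norm_deriv_le hP hM hw).trans ?_
  simpa only [abs_neg] using
    hP.sum_mul_abs_cellMean_mul_cellMean_le (fun x hx => hg.abs_le_half_l2Norm_deriv hx) hχ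

theorem two_mul_mul_l2Norm_deriv_le_add {g₁ g₁' χ₁ g₂ g₂' χ₂ : ℝ → ℝ}
    (hv : IsCellSolution N t w
      (fun j _ => -(cellMean t j g₁ * cellMean t j χ₁) - cellMean t j g₂ * cellMean t j χ₂)
      v v' v'')
    (hP : IsUnitIntervalPartition N t) (hM : 0 ≤ M) (hw : ∀ k < N, -M ≤ cellMean t (k + 1) w)
    (hg₁ : IsDirichletC1 g₁ g₁') (hg₂ : IsDirichletC1 g₂ g₂')
    (hχ₁ : IntervalIntegrable χ₁ volume 0 1) (hχ₂ : IntervalIntegrable χ₂ volume 0 1) :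
    2 * (1 - M / π ^ 2) * l2Norm v' ≤
      l2Norm g₁' / 2 * (∫ x in (0:ℝ)..1, |χ₁ x|) + l2Norm g₂' / 2 * ∫ x in (0:ℝ)..1, |χ₂ x| := by
  refine (hv.two_mul_mul_l2Norm_deriv_le hP hM hw).trans (le_trans ?_ (add_le_add
    (hP.sum_mul_abs_cellMean_mul_cellMean_le (fun x hx => hg₁.abs_le_half_l2Norm_deriv hx) hχ₁)
    (hP.sum_mul_abs_cellMean_mul_cellMean_le (fun x hx => hg₂.abs_le_half_l2Norm_deriv hx) hχ₂)))
  rw [← Finset.sum_add_distrib]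
  refine Finset.sum_le_sum fun k hk => ?_
  rw [← mul_add, ← abs_neg (cellMean t (k + 1) g₁ * cellMean t (k + 1) χ₁)]
  exact mul_le_mul_of_nonneg_left (abs_sub _ _)
    (sub_pos.2 (hP.lt_succ k (Finset.mem_range.1 hk))).le

end IsCellSolution

theorem second_derivative_bound_general
    (N : ℕ) (t : ℕ → ℝ)
    (ht0 : t 0 = 0) (htN : t N = 1) (hmono : ∀ i < N, t i < t (i + 1))
    (f : ℝ → ℝ) (hfc : ContinuousOn f (Set.Icc 0 1))
    (wl wu : ℝ) (hMpi : max |wl| |wu| < π ^ 2)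
    (w φ ψ : ℝ → ℝ)
    (hwm : Measurable w) (hφm : Measurable φ) (hψm : Measurable ψ)
    (hwb : ∀ᵐ x ∂(volume.restrict (Set.Ioo (0:ℝ) 1)), wl ≤ w x ∧ w x ≤ wu)
    (hφb : ∀ᵐ x ∂(volume.restrict (Set.Ioo (0:ℝ) 1)), |φ x| ≤ wu - wl)
    (hψb : ∀ᵐ x ∂(volume.restrict (Set.Ioo (0:ℝ) 1)), |ψ x| ≤ wu - wl)
    (u u' u'' qφ qφ' qφ'' qψ qψ' qψ'' ξ ξ' ξ'' : ℝ → ℝ)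
    (hu : ∀ x ∈ Set.Icc (0:ℝ) 1, HasDerivAt u (u' x) x)
    (hu'c : ContinuousOn u' (Set.Icc 0 1))
    (hu0 : u 0 = 0) (hu1 : u 1 = 0)
    (hode : ∀ j ∈ Finset.Icc 1 N, ∀ x ∈ Set.Ioo (t (j - 1)) (t j),
      HasDerivAt u' (u'' x) x ∧
      -u'' x + cellMean t j w * cellMean t j u = f x)
    (hqφ : ∀ x ∈ Set.Icc (0:ℝ) 1, HasDerivAt qφ (qφ' x) x)
    (hqφ'c : ContinuousOn qφ' (Set.Icc 0 1))
    (hqφ0 : qφ 0 = 0) (hqφ1 : qφ 1 = 0)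
    (hodeqφ : ∀ j ∈ Finset.Icc 1 N, ∀ x ∈ Set.Ioo (t (j - 1)) (t j),
      HasDerivAt qφ' (qφ'' x) x ∧
      -qφ'' x + cellMean t j w * cellMean t j qφ = -(cellMean t j u * cellMean t j φ))
    (hqψ : ∀ x ∈ Set.Icc (0:ℝ) 1, HasDerivAt qψ (qψ' x) x)
    (hqψ'c : ContinuousOn qψ' (Set.Icc 0 1))
    (hqψ0 : qψ 0 = 0) (hqψ1 : qψ 1 = 0)
    (hodeqψ : ∀ j ∈ Finset.Icc 1 N, ∀ x ∈ Set.Ioo (t (j - 1)) (t j),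
      HasDerivAt qψ' (qψ'' x) x ∧
      -qψ'' x + cellMean t j w * cellMean t j qψ = -(cellMean t j u * cellMean t j ψ))
    (hξ : ∀ x ∈ Set.Icc (0:ℝ) 1, HasDerivAt ξ (ξ' x) x)
    (hξ'c : ContinuousOn ξ' (Set.Icc 0 1))
    (hξ0 : ξ 0 = 0) (hξ1 : ξ 1 = 0)
    (hodeξ : ∀ j ∈ Finset.Icc 1 N, ∀ x ∈ Set.Ioo (t (j - 1)) (t j),
      HasDerivAt ξ' (ξ'' x) x ∧
      -ξ'' x + cellMean t j w * cellMean t j ξ =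
        -(cellMean t j qφ * cellMean t j ψ) - cellMean t j qψ * cellMean t j φ) :
    Real.sqrt (∫ x in (0:ℝ)..1, ξ x ^ 2) ≤
      (Real.sqrt (∫ x in (0:ℝ)..1, f x ^ 2) /
          (2 * π * (1 - max |wl| |wu| / π ^ 2) ^ 3)) *
        ((∫ x in (0:ℝ)..1, |ψ x|) * ∫ x in (0:ℝ)..1, |φ x|) := by
  have hP : IsUnitIntervalPartition N t := ⟨ht0, htN, hmono⟩
  set M := max |wl| |wu|
  set c := 1 - M / π ^ 2
  set Φ := ∫ x in (0:ℝ)..1, |φ x|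
  set Ψ := ∫ x in (0:ℝ)..1, |ψ x|
  have hM : 0 ≤ M := (abs_nonneg wl).trans (le_max_left _ _)
  have hc : 0 < c := sub_pos.2 ((div_lt_one (by positivity)).2 hMpi)
  have hw := hP.neg_max_abs_le_cellMean hwm hwb
  have hφi := intervalIntegrable_of_ae_abs_le zero_le_one hφm hφb
  have hψi := intervalIntegrable_of_ae_abs_le zero_le_one hψm hψb
  have hU : IsCellSolution N t w (fun _ => f) u u' u'' := ⟨⟨hu, hu'c, hu0, hu1⟩, hode⟩
  have hQφ : IsCellSolution N t w _ qφ qφ' qφ'' := ⟨⟨hqφ, hqφ'c, hqφ0, hqφ1⟩, hodeqφ⟩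
  have hQψ : IsCellSolution N t w _ qψ qψ' qψ'' := ⟨⟨hqψ, hqψ'c, hqψ0, hqψ1⟩, hodeqψ⟩
  have hΞ : IsCellSolution N t w _ ξ ξ' ξ'' := ⟨⟨hξ, hξ'c, hξ0, hξ1⟩, hodeξ⟩
  have hu_bd := hU.pi_mul_mul_l2Norm_deriv_le hP hM hw hfc
  have hφ_bd := hQφ.two_mul_mul_l2Norm_deriv_le_mul_integral_abs hP hM hw hU.1 hφi
  have hψ_bd := hQψ.two_mul_mul_l2Norm_deriv_le_mul_integral_abs hP hM hw hU.1 hψi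
  have hξ_bd := hΞ.two_mul_mul_l2Norm_deriv_le_add hP hM hw hQφ.1 hQψ.1 hψi hφi
  have hΦ : 0 ≤ Φ := intervalIntegral.integral_nonneg zero_le_one fun _ _ => abs_nonneg _
  have hΨ : 0 ≤ Ψ := intervalIntegral.integral_nonneg zero_le_one fun _ _ => abs_nonneg _
  show l2Norm ξ ≤ l2Norm f / (2 * π * c ^ 3) * (Ψ * Φ)
  rw [div_mul_eq_mul_div, le_div_iff₀ (by positivity)]
  calc l2Norm ξ * (2 * π * c ^ 3) ≤ l2Norm ξ * (8 * π ^ 2 * c ^ 3) := by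
        gcongr l2Norm ξ * (?_ * c ^ 3)
        · exact l2Norm_nonneg _
        · nlinarith [pi_gt_three]
    _ = 8 * π * c ^ 3 * (π * l2Norm ξ) := by ring
    _ ≤ 8 * π * c ^ 3 * l2Norm ξ' := by gcongr; exact hΞ.pi_mul_l2Norm_le
    _ ≤ π * c * l2Norm u' * (Ψ * Φ) := by
        have h1 := mul_le_mul_of_nonneg_left hξ_bd (by positivity : 0 ≤ 4 * π * c ^ 2)
        have h2 := mul_le_mul_of_nonneg_left hφ_bd (by positivity : 0 ≤ π * c * Ψ)
        have h3 := mul_le_mul_of_nonneg_left hψ_bd (by positivity : 0 ≤ π * c * Φ)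
        linarith
    _ ≤ l2Norm f * (Ψ * Φ) := by gcongr

theorem second_derivative_bound
    (N : ℕ) (hN : 1 ≤ N) (t : ℕ → ℝ)
    (ht0 : t 0 = 0) (htN : t N = 1) (hmono : ∀ i < N, t i < t (i + 1))
    (f : ℝ → ℝ) (hfc : ContinuousOn f (Set.Icc 0 1))
    (wl wu : ℝ) (hwlu : wl ≤ wu) (hMpi : max |wl| |wu| < π ^ 2)
    (w φ ψ : ℝ → ℝ)
    (hwm : Measurable w) (hφm : Measurable φ) (hψm : Measurable ψ)
    (hwb : ∀ᵐ x ∂(volume.restrict (Set.Ioo (0:ℝ) 1)), wl ≤ w x ∧ w x ≤ wu)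
    (hφb : ∀ᵐ x ∂(volume.restrict (Set.Ioo (0:ℝ) 1)), |φ x| ≤ wu - wl)
    (hψb : ∀ᵐ x ∂(volume.restrict (Set.Ioo (0:ℝ) 1)), |ψ x| ≤ wu - wl)
    (u u' u'' qφ qφ' qφ'' qψ qψ' qψ'' ξ ξ' ξ'' : ℝ → ℝ)
    (hu : ∀ x ∈ Set.Icc (0:ℝ) 1, HasDerivAt u (u' x) x)
    (hu'c : ContinuousOn u' (Set.Icc 0 1))
    (hu0 : u 0 = 0) (hu1 : u 1 = 0)
    (hode : ∀ j ∈ Finset.Icc 1 N, ∀ x ∈ Set.Ioo (t (j - 1)) (t j),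
      HasDerivAt u' (u'' x) x ∧
      -u'' x + cellMean t j w * cellMean t j u = f x)
    (hqφ : ∀ x ∈ Set.Icc (0:ℝ) 1, HasDerivAt qφ (qφ' x) x)
    (hqφ'c : ContinuousOn qφ' (Set.Icc 0 1))
    (hqφ0 : qφ 0 = 0) (hqφ1 : qφ 1 = 0)
    (hodeqφ : ∀ j ∈ Finset.Icc 1 N, ∀ x ∈ Set.Ioo (t (j - 1)) (t j),
      HasDerivAt qφ' (qφ'' x) x ∧
      -qφ'' x + cellMean t j w * cellMean t j qφ = -(cellMean t j u * cellMean t j φ))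
    (hqψ : ∀ x ∈ Set.Icc (0:ℝ) 1, HasDerivAt qψ (qψ' x) x)
    (hqψ'c : ContinuousOn qψ' (Set.Icc 0 1))
    (hqψ0 : qψ 0 = 0) (hqψ1 : qψ 1 = 0)
    (hodeqψ : ∀ j ∈ Finset.Icc 1 N, ∀ x ∈ Set.Ioo (t (j - 1)) (t j),
      HasDerivAt qψ' (qψ'' x) x ∧
      -qψ'' x + cellMean t j w * cellMean t j qψ = -(cellMean t j u * cellMean t j ψ))
    (hξ : ∀ x ∈ Set.Icc (0:ℝ) 1, HasDerivAt ξ (ξ' x) x)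
    (hξ'c : ContinuousOn ξ' (Set.Icc 0 1))
    (hξ0 : ξ 0 = 0) (hξ1 : ξ 1 = 0)
    (hodeξ : ∀ j ∈ Finset.Icc 1 N, ∀ x ∈ Set.Ioo (t (j - 1)) (t j),
      HasDerivAt ξ' (ξ'' x) x ∧
      -ξ'' x + cellMean t j w * cellMean t j ξ =
        -(cellMean t j qφ * cellMean t j ψ) - cellMean t j qψ * cellMean t j φ) :
    Real.sqrt (∫ x in (0:ℝ)..1, ξ x ^ 2) ≤
      (Real.sqrt (∫ x in (0:ℝ)..1, f x ^ 2) /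
          (2 * π * (1 - max |wl| |wu| / π ^ 2) ^ 3)) *
        ((∫ x in (0:ℝ)..1, |ψ x|) * ∫ x in (0:ℝ)..1, |φ x|) :=
  second_derivative_bound_general N t ht0 htN hmono f hfc wl wu hMpi w φ ψ hwm hφm hψm hwb hφb hψb u
    u' u'' qφ qφ' qφ'' qψ qψ' qψ'' ξ ξ' ξ'' hu hu'c hu0 hu1 hode hqφ hqφ'c hqφ0 hqφ1 hodeqφ hqψ
    hqψ'c hqψ0 hqψ1 hodeqψ hξ hξ'c hξ0 hξ1 hodeξ
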